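/- Let G′ be the directed graph obtained from the graph on vertices {U, X₀, X₁, X₂, D₁, D₂, o₁, o₂, Δ₁, Δ₂, E₁} with edge set {(U,D₁), (U,D₂), (U,X₀), (U,X₁), (U,X₂), (X₀,Δ₁), (X₀,Δ₂), (X₁,Δ₁), (X₁,Δ₂), (X₂,Δ₂), (X₀,D₁), (X₁,D₁), (X₀,D₂), (X₁,D₂), (X₂,D₂), (X₀,X₁), (X₁,X₂), (E₁,Δ₁), (E₁,Δ₂), (o₁,D₂), (o₁,Δ₁), (o₁,Δ₂), (o₂,Δ₂)} by adding the edge (o₁, X₂). (This is the pruned Δ-SWIG of the three-period staggered difference-in-differences model with treatment–covariate feedback, in which X₂ plays the role of the potential covariate X₂(0), affected by the fixed part o₁ of the period-1 treatment node.) Then in G′: (i) {Δ₂} and {D₁, D₂} are d-separated by {X₀, X₁, X₂, o₁, o₂}; and (ii) every subset Z of {X₀, X₁, X₂, Δ₁} such that {Δ₂} and {D₁, D₂} are d-separated by Z ∪ {o₁, o₂} in G′ must contain X₂; that is, the potential covariate X₂(0) is indispensable in every conditioning set that jointly d-separates the difference of untreated potential outcomes in period 2 from the treatment variables. -/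

import Mathlib

/-! ## Directed graphs, paths, d-separation -/

namespace DeltaSwig

variable {V : Type*}

/-- `b` is a descendant of `a`: reachable from `a` by a nonempty directed path. -/
def Descendant (E : V → V → Prop) (a b : V) : Prop := Relation.TransGen E a b

/-- A directed graph is a DAG if no vertex is related to itself by the
transitive closure of the edge relation. -/
def IsDAG (E : V → V → Prop) : Prop := ∀ v : V, ¬ Relation.TransGen E v v

/-- A path of length `k ≥ 1` between `v 0` and `v k`: pairwise distinct vertices,
consecutive vertices joined by an edge in either direction. -/
structure IsPath (E : V → V → Prop) (k : ℕ) (v : ℕ → V) : Prop where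
  one_le : 1 ≤ k
  inj : ∀ i ≤ k, ∀ j ≤ k, v i = v j → i = j
  adj : ∀ i < k, E (v i) (v (i + 1)) ∨ E (v (i + 1)) (v i)

/-- The interior vertex `v j` is a collider on the path `v`. -/
def IsCollider (E : V → V → Prop) (v : ℕ → V) (j : ℕ) : Prop :=
  E (v (j - 1)) (v j) ∧ E (v (j + 1)) (v j)

/-- The path `v` (of length `k`) is blocked by the set `Z`. -/
def Blocked (E : V → V → Prop) (k : ℕ) (v : ℕ → V) (Z : Set V) : Prop :=
  ∃ j, 0 < j ∧ j < k ∧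
    ((¬ IsCollider E v j ∧ v j ∈ Z) ∨
      (IsCollider E v j ∧ v j ∉ Z ∧ ∀ w, Descendant E (v j) w → w ∉ Z))

/-- `X` and `Y` are d-separated by `Z`: every path from a vertex of `X` to a
vertex of `Y` is blocked by `Z`. -/
def DSep (E : V → V → Prop) (X Y Z : Set V) : Prop :=
  ∀ (k : ℕ) (v : ℕ → V), IsPath E k v → v 0 ∈ X → v k ∈ Y → Blocked E k v Z

/-- Restriction of an edge relation to a set of kept vertices (vertex deletion). -/
def restrictEdge (E : V → V → Prop) (K : Set V) : V → V → Prop :=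
  fun a b => E a b ∧ a ∈ K ∧ b ∈ K

/-- The parents of a vertex. -/
def parents (E : V → V → Prop) (v : V) : Set V := {w | E w v}

end DeltaSwig

namespace DeltaSwig

/-- Vertices of the pruned Δ-SWIG of the three-period staggered
difference-in-differences model. -/
inductive V14 : Type
  | U | X0 | X1 | X2 | D1 | D2 | o1 | o2 | Δ1 | Δ2 | E1
  deriving DecidableEq

open V14 in
/-- Edges of the pruned three-period Δ-SWIG *with* treatment–covariate
feedback: the base edges together with `(o₁, X₂)`, so that `X₂` plays the role
of the potential covariate `X₂(0)`. -/
def E15 : V14 → V14 → Prop := fun a b =>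
  (a, b) ∈ ([(U, D1), (U, D2), (U, X0), (U, X1), (U, X2),
    (X0, Δ1), (X0, Δ2), (X1, Δ1), (X1, Δ2), (X2, Δ2),
    (X0, D1), (X1, D1), (X0, D2), (X1, D2), (X2, D2),
    (X0, X1), (X1, X2),
    (E1, Δ1), (E1, Δ2),
    (o1, D2), (o1, Δ1), (o1, Δ2), (o2, Δ2),
    (o1, X2)] : List (V14 × V14))

/-!
Starting from `Δ₂`, which is a sink, a path must first step back to a parent of `Δ₂`. Every
parent except `E₁` lies in the conditioning set and is a non-collider there. The parent `E₁`
is a source whose only other child is the sink `Δ₁`, so a path through `E₁` has an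
unconditioned collider without descendants at `Δ₁`. Conversely the fork `Δ₂ ← X₂ → D₂` is
blocked only by conditioning on `X₂`.
-/

instance : DecidableRel E15 := fun a b => by unfold E15; infer_instance

section General

variable {V : Type*} {E : V → V → Prop}

def IsSink (E : V → V → Prop) (a : V) : Prop := ∀ b, ¬ E a b

def IsSource (E : V → V → Prop) (a : V) : Prop := ∀ b, ¬ E b a

theorem IsSink.not_descendant {a : V} (ha : IsSink E a) (b : V) : ¬ Descendant E a b := by
  intro h
  obtain ⟨c, hac, -⟩ := Relation.TransGen.head'_iff.mp h
  exact ha c hac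

theorem blocked_of_mem_of_not_edge {k j : ℕ} {v : ℕ → V} {Z : Set V} (hj0 : 0 < j)
    (hjk : j < k) (hnot : ¬ E (v (j - 1)) (v j)) (hZ : v j ∈ Z) : Blocked E k v Z :=
  ⟨j, hj0, hjk, Or.inl ⟨fun hc => hnot hc.1, hZ⟩⟩

namespace IsPath

variable {k : ℕ} {v : ℕ → V}

theorem edge_from_succ_of_isSink (hp : IsPath E k v) {i : ℕ} (hi : i < k)
    (hs : IsSink E (v i)) : E (v (i + 1)) (v i) :=
  (hp.adj i hi).resolve_left (hs _)

theorem edge_to_succ_of_isSource (hp : IsPath E k v) {i : ℕ} (hi : i < k)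
    (hs : IsSource E (v i)) : E (v i) (v (i + 1)) :=
  (hp.adj i hi).resolve_right (hs _)

theorem edge_from_pred_of_isSink (hp : IsPath E k v) {j : ℕ} (hj0 : 0 < j) (hjk : j ≤ k)
    (hs : IsSink E (v j)) : E (v (j - 1)) (v j) := by
  have h := hp.adj (j - 1) (by omega)
  rw [Nat.sub_add_cancel hj0] at h
  exact h.resolve_right (hs _)

theorem blocked_of_isSink (hp : IsPath E k v) {Z : Set V} {j : ℕ} (hj0 : 0 < j) (hjk : j < k)
    (hs : IsSink E (v j)) (hZ : v j ∉ Z) : Blocked E k v Z :=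
  ⟨j, hj0, hjk, Or.inr ⟨⟨hp.edge_from_pred_of_isSink hj0 hjk.le hs,
    hp.edge_from_succ_of_isSink hjk hs⟩, hZ, fun w hw => absurd hw (hs.not_descendant w)⟩⟩

end IsPath

theorem DSep.mem_of_fork {X Y Z : Set V} {a b c : V} (h : DSep E X Y Z) (hba : E b a)
    (hbc : E b c) (hab : ¬ E a b) (hb : b ≠ c) (hac : a ≠ c) (ha : a ∈ X) (hc : c ∈ Y) :
    b ∈ Z := by
  have ha' : a ≠ b := fun h => hab (h ▸ hba)
  let v : ℕ → V := fun n => [a, b, c].getD n c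
  have hp : IsPath E 2 v := by
    refine ⟨one_le_two, fun i hi j hj hij => ?_, fun i hi => ?_⟩
    · interval_cases i <;> interval_cases j <;> simp_all [v, eq_comm]
    · interval_cases i
      exacts [Or.inr hba, Or.inl hbc]
  obtain ⟨j, hj0, hj2, hblock⟩ := h 2 v hp ha hc
  obtain rfl : j = 1 := by omega
  rcases hblock with ⟨-, hmem⟩ | ⟨hcoll, -⟩
  · exact hmem
  · exact absurd hcoll.1 hab

end General

open V14

theorem isSink_Δ1 : IsSink E15 Δ1 := by intro b; cases b <;> decide

theorem isSink_Δ2 : IsSink E15 Δ2 := by intro b; cases b <;> decide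

theorem isSource_E1 : IsSource E15 E1 := by intro b; cases b <;> decide

theorem eq_E1_or_mem_of_E15_Δ2 {p : V14} (hp : E15 p Δ2) :
    p = E1 ∨ p ∈ ({X0, X1, X2, o1, o2} : Set V14) := by
  revert hp; cases p <;> decide

theorem eq_Δ1_or_eq_Δ2_of_E15_E1 {c : V14} (hc : E15 E1 c) : c = Δ1 ∨ c = Δ2 := by
  revert hc; cases c <;> decide

theorem dsep_Δ2_treatments_covariates :
    DSep E15 {Δ2} {D1, D2} {X0, X1, X2, o1, o2} := by
  rintro k v hp (h0 : v 0 = Δ2) hk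
  have h10 : E15 (v 1) Δ2 := h0 ▸ hp.edge_from_succ_of_isSink hp.one_le (h0 ▸ isSink_Δ2)
  have h1k : 1 < k := lt_of_le_of_ne hp.one_le fun h => by
    subst h
    rcases hk with h | h <;> rw [h] at h10 <;> exact absurd h10 (by decide)
  rcases eq_E1_or_mem_of_E15_Δ2 h10 with hE1 | hZ
  · have h12 : E15 E1 (v 2) := hE1 ▸ hp.edge_to_succ_of_isSource h1k (hE1 ▸ isSource_E1)
    have hv2 : v 2 = Δ1 := (eq_Δ1_or_eq_Δ2_of_E15_E1 h12).resolve_right fun h =>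
      absurd (hp.inj 0 (by omega) 2 (by omega) (h0.trans h.symm)) (by omega)
    have h2k : 2 < k := lt_of_le_of_ne h1k fun h => by
      subst h
      rcases hk with h | h <;> rw [hv2] at h <;> exact absurd h (by decide)
    exact hp.blocked_of_isSink two_pos h2k (hv2 ▸ isSink_Δ1) (by rw [hv2]; decide)
  · exact blocked_of_mem_of_not_edge one_pos h1k
      (by rw [Nat.sub_self, h0]; exact isSink_Δ2 _) hZ

/-- **three-period Δ-SWIG with treatment–covariate feedback.**
(i) `{Δ₂}` and `{D₁, D₂}` are d-separated by `{X₀, X₁, X₂, o₁, o₂}`; (ii) any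
subset `Z` of `{X₀, X₁, X₂, Δ₁}` such that `{Δ₂}` and `{D₁, D₂}` are
d-separated by `Z ∪ {o₁, o₂}` must contain `X₂`: the potential covariate
`X₂(0)` is indispensable. -/
theorem deltaSWIG_treatment_covariate_feedback :
    DSep E15 {Δ2} {D1, D2} {X0, X1, X2, o1, o2} ∧
    ∀ Z : Set V14, Z ⊆ {X0, X1, X2, Δ1} →
      DSep E15 {Δ2} {D1, D2} (Z ∪ {o1, o2}) → X2 ∈ Z := by
  refine ⟨dsep_Δ2_treatments_covariates, fun Z _ hsep => ?_⟩
  simpa using hsep.mem_of_fork (a := Δ2) (b := X2) (c := D2) (by decide) (by decide)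
    (by decide) (by decide) (by decide) rfl (by simp)

end DeltaSwig
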